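/- arXiv:1110.2937 — 2 statements merged into one kernel-verified Lean document; each statement's English description precedes it below -/
import Mathlib

section
/- Let $\Sigma, \Sigma^* $ be an adjoint pair of additive endofunctors on a module category such that there are functorial exact sequences $0 \to \mathrm{soc}_i \to \mathrm{id} \to \Sigma\Sigma^* \to 0$ and $0 \to \Sigma^*\Sigma \to \mathrm{id} \to \mathrm{top}_i \to 0$. Then $\Sigma$ and $\Sigma^*$ restrict to mutually inverse equivalences between the full subcategory of modules with trivial $i$-top and the full subcategory of modules with trivial $i$-socle. -/
/-!
Put `k := α.app (Σ M)`. Naturality of `γ` at `k`, with `α ≫ γ = 0` and `γ` epi, gives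
`ΣΣ* k = 0`. For the adjunction `Σ* ⊣ Σ`, a morphism into `Σ M` factors as the unit followed
by `ΣΣ*` of itself and `Σ` of the counit, so `k = 0`; as `k` is mono, `soc (Σ M) = 0` for
every `M`, and dually `top (Σ* N) = 0`. Where `top M = 0` (resp. `soc N = 0`), the exact
sequences make `δ.app M` (resp. `γ.app N`) both mono and epi.
-/

open CategoryTheory Limits

namespace CategoryTheory

namespace Adjunction

variable {C D : Type*} [Category C] [Category D] {F : C ⥤ D} {G : D ⥤ C}

lemma eq_zero_of_map_map_eq_zero_of_tgt [HasZeroMorphisms C] (adj : F ⊣ G) {Y : C} {M : D}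
    {k : Y ⟶ G.obj M} (h : G.map (F.map k) = 0) : k = 0 := by
  have hk : k = adj.unit.app Y ≫ G.map (F.map k) ≫ G.map (adj.counit.app M) := by
    simp
  rw [hk, h, zero_comp, comp_zero]

lemma eq_zero_of_map_map_eq_zero_of_src [HasZeroMorphisms D] (adj : F ⊣ G) {N : C} {Y : D}
    {c : F.obj N ⟶ Y} (h : F.map (G.map c) = 0) : c = 0 := by
  have hc : c = F.map (adj.unit.app N) ≫ F.map (G.map c) ≫ adj.counit.app Y := by
    simp
  rw [hc, h, zero_comp, comp_zero]

end Adjunction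

variable {C : Type*} [Category C] [HasZeroMorphisms C] {S T : C ⥤ C}

lemma NatTrans.map_app_eq_zero_of_comp_eq_zero_of_epi (α : S ⟶ 𝟭 C) (γ : 𝟭 C ⟶ T) {X : C}
    (h : α.app X ≫ γ.app X = 0) [Epi (γ.app (S.obj X))] : T.map (α.app X) = 0 := by
  rw [← cancel_epi (γ.app (S.obj X)), comp_zero, ← γ.naturality]
  exact h

lemma NatTrans.map_app_eq_zero_of_comp_eq_zero_of_mono (δ : T ⟶ 𝟭 C) (ε : 𝟭 C ⟶ S) {X : C}
    (h : δ.app X ≫ ε.app X = 0) [Mono (δ.app (S.obj X))] : T.map (ε.app X) = 0 := by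
  rw [← cancel_mono (δ.app (S.obj X)), zero_comp, δ.naturality]
  exact h

end CategoryTheory

theorem stmt2_general {A : Type*} [Category A] [Abelian A]
    (Sig SigStar soc top : A ⥤ A)
    (adj : SigStar ⊣ Sig)
    -- the functorial exact sequence 0 → soc_i → id → ΣΣ* → 0
    (α : soc ⟶ 𝟭 A) (γ : 𝟭 A ⟶ SigStar ⋙ Sig)
    (hαγ : ∀ M : A, α.app M ≫ γ.app M = 0)
    (hα : ∀ M : A, Mono (α.app M)) (hγ : ∀ M : A, Epi (γ.app M))
    (hex₁ : ∀ M : A, (ShortComplex.mk (α.app M) (γ.app M) (hαγ M)).Exact)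
    -- the functorial exact sequence 0 → Σ*Σ → id → top_i → 0
    (δ : Sig ⋙ SigStar ⟶ 𝟭 A) (ε : 𝟭 A ⟶ top)
    (hδε : ∀ M : A, δ.app M ≫ ε.app M = 0)
    (hδ : ∀ M : A, Mono (δ.app M)) (hε : ∀ M : A, Epi (ε.app M))
    (hex₂ : ∀ M : A, (ShortComplex.mk (δ.app M) (ε.app M) (hδε M)).Exact) :
    -- Σ sends trivial i-top modules to trivial i-socle modules, Σ* conversely,
    (∀ M : A, IsZero (top.obj M) → IsZero (soc.obj (Sig.obj M))) ∧
    (∀ N : A, IsZero (soc.obj N) → IsZero (top.obj (SigStar.obj N))) ∧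
    -- and the unit/counit are isomorphisms there, so the restrictions of Σ and Σ*
    -- are mutually inverse equivalences between the two full subcategories
    (∀ M : A, IsZero (top.obj M) → IsIso (δ.app M)) ∧
    (∀ N : A, IsZero (soc.obj N) → IsIso (γ.app N)) := by
  refine ⟨fun M _ => ?_, fun N _ => ?_, fun M hM => ?_, fun N hN => ?_⟩
  · exact IsZero.of_mono_eq_zero _ (adj.eq_zero_of_map_map_eq_zero_of_tgt
      (NatTrans.map_app_eq_zero_of_comp_eq_zero_of_epi α γ (hαγ _)))
  · exact IsZero.of_epi_eq_zero _ (adj.eq_zero_of_map_map_eq_zero_of_src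
      (NatTrans.map_app_eq_zero_of_comp_eq_zero_of_mono δ ε (hδε _)))
  · have : Epi (δ.app M) := (hex₂ M).epi_f (hM.eq_of_tgt _ _)
    exact isIso_of_mono_of_epi _
  · have : Mono (γ.app N) := (hex₁ N).mono_g (hN.eq_of_src _ _)
    exact isIso_of_mono_of_epi _

/-- an adjoint pair `Σ* ⊣ Σ` of additive endofunctors with functorial
exact sequences `0 → soc_i → id → ΣΣ* → 0` and `0 → Σ*Σ → id → top_i → 0` restricts
to mutually inverse equivalences between the full subcategory of modules with trivial
`i`-top and the full subcategory of modules with trivial `i`-socle. -/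
theorem stmt2 {A : Type*} [Category A] [Abelian A]
    (Sig SigStar soc top : A ⥤ A) [Sig.Additive] [SigStar.Additive]
    (adj : SigStar ⊣ Sig)
    -- the functorial exact sequence 0 → soc_i → id → ΣΣ* → 0
    (α : soc ⟶ 𝟭 A) (γ : 𝟭 A ⟶ SigStar ⋙ Sig)
    (hαγ : ∀ M : A, α.app M ≫ γ.app M = 0)
    (hα : ∀ M : A, Mono (α.app M)) (hγ : ∀ M : A, Epi (γ.app M))
    (hex₁ : ∀ M : A, (ShortComplex.mk (α.app M) (γ.app M) (hαγ M)).Exact)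
    -- the functorial exact sequence 0 → Σ*Σ → id → top_i → 0
    (δ : Sig ⋙ SigStar ⟶ 𝟭 A) (ε : 𝟭 A ⟶ top)
    (hδε : ∀ M : A, δ.app M ≫ ε.app M = 0)
    (hδ : ∀ M : A, Mono (δ.app M)) (hε : ∀ M : A, Epi (ε.app M))
    (hex₂ : ∀ M : A, (ShortComplex.mk (δ.app M) (ε.app M) (hδε M)).Exact) :
    -- Σ sends trivial i-top modules to trivial i-socle modules, Σ* conversely,
    (∀ M : A, IsZero (top.obj M) → IsZero (soc.obj (Sig.obj M))) ∧
    (∀ N : A, IsZero (soc.obj N) → IsZero (top.obj (SigStar.obj N))) ∧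
    -- and the unit/counit are isomorphisms there, so the restrictions of Σ and Σ*
    -- are mutually inverse equivalences between the two full subcategories
    (∀ M : A, IsZero (top.obj M) → IsIso (δ.app M)) ∧
    (∀ N : A, IsZero (soc.obj N) → IsIso (γ.app N)) :=
  stmt2_general Sig SigStar soc top adj α γ hαγ hα hγ hex₁ δ ε hδε hδ hε hex₂
end

section
/- Let $Q$ be a quiver whose underlying graph is connected with at least one edge, and suppose vertices $i$ and $j$ are joined by exactly one edge. If BGP reflection functors satisfy the braid relation $\Sigma_i\Sigma_j\Sigma_i \cong \Sigma_j\Sigma_i\Sigma_j$ as functors on nilpotent $\Lambda$-modules, then for any two reduced expressions $(i_r,\ldots,i_1)$ and $(j_r,\ldots,j_1)$ of the same Weyl group element $w$ in a simply-laced Weyl group, the functors $\Sigma_{i_r}\cdots\Sigma_{i_1}$ and $\Sigma_{j_r}\cdots\Sigma_{j_1}$ are isomorphic. -/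
/-! Matsumoto's argument, by induction on length. If `i :: ω` and `j :: ω'` are reduced words
of `w` with `i ≠ j`, both `s i` and `s j` are left descents of `w`. In the simply-laced case this
forces `w = s i * s j * v` (when `m i j = 2`) or `w = s i * s j * s i * v` (when `m i j = 3`) with
lengths adding up, so by induction `i :: ω` and `j :: ω'` are related to the two sides of one
braid move applied to a reduced word of `v`.

The descent analysis rests on the exchange condition. It is proved with Tits' sign
representation of `W` on `W × ZMod 2`: the parity of the number of occurrences of `t` in the
inversion sequence of a word only depends on the element the word represents. That the simple
reflections are distinct follows from the geometric representation on `B → ℤ`. -/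

open CategoryTheory

/-- The composite functor `Σ_{i_1} ⋙ ⋯ ⋙ Σ_{i_r}` attached to the word `[i_r, …, i_1]`. -/
def wordFunctor {B : Type*} {C : Type*} [Category C] (Sg : B → C ⥤ C) :
    List B → C ⥤ C
  | [] => 𝟭 C
  | i :: t => wordFunctor Sg t ⋙ Sg i

section ConjSignPerm

variable {G : Type*} [Group G]

lemma mul_mul_inv_eq_iff_eq (g x y : G) : g * x * g⁻¹ = y ↔ x = g⁻¹ * y * g := by
  constructor <;> rintro rfl <;> group

variable [DecidableEq G]

def conjSignPerm (a : G) : Equiv.Perm (G × ZMod 2) where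
  toFun p := (a * p.1 * a⁻¹, p.2 + if p.1 = a then 1 else 0)
  invFun p := (a⁻¹ * p.1 * a, p.2 + if p.1 = a then 1 else 0)
  left_inv p := by
    ext
    · simp [mul_assoc]
    · simp [mul_inv_eq_iff_eq_mul, add_assoc, CharTwo.add_self_eq_zero]
  right_inv p := by
    ext
    · simp [mul_assoc]
    · simp [inv_mul_eq_iff_eq_mul, add_assoc, CharTwo.add_self_eq_zero, eq_comm]

@[simp] lemma conjSignPerm_apply (a : G) (p : G × ZMod 2) :
    conjSignPerm a p = (a * p.1 * a⁻¹, p.2 + if p.1 = a then 1 else 0) := rfl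

lemma conjSignPerm_mul_pow {a b : G} (ha : a * a = 1) (hb : b * b = 1) (k : ℕ) (x : G)
    (ε : ZMod 2) :
    ((conjSignPerm a * conjSignPerm b) ^ k) (x, ε) =
      ((a * b) ^ k * x * ((a * b) ^ k)⁻¹,
        ε + ∑ n ∈ Finset.range (2 * k), if x = (b * a) ^ n * b then 1 else 0) := by
  have ha' : a⁻¹ = a := inv_eq_of_mul_eq_one_right ha
  have hb' : b⁻¹ = b := inv_eq_of_mul_eq_one_right hb
  induction k generalizing x ε with
  | zero => simp
  | succ k ih =>
    have hfirst : b * x * b⁻¹ = a ↔ x = (b * a) ^ 1 * b := by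
      rw [mul_mul_inv_eq_iff_eq, hb', pow_one]
    have hshift (n : ℕ) :
        a * (b * x * b⁻¹) * a⁻¹ = (b * a) ^ n * b ↔ x = (b * a) ^ (n + 2) * b := by
      rw [show (b * a) ^ (n + 2) * b = b⁻¹ * a⁻¹ * ((b * a) ^ n * b) * (a * b) by
        rw [pow_succ, pow_succ', ha', hb']; simp only [mul_assoc], ← mul_inv_rev,
        ← mul_mul_inv_eq_iff_eq]
      simp only [mul_assoc, mul_inv_rev]
    rw [pow_succ, Equiv.Perm.mul_apply, Equiv.Perm.mul_apply, conjSignPerm_apply,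
      conjSignPerm_apply, ih]
    simp only [hfirst, hshift, Nat.mul_succ, Finset.sum_range_succ' _ (2 * k + 1),
      Finset.sum_range_succ' _ (2 * k)]
    refine Prod.ext (by simp only [pow_succ]; group) ?_
    simp only [pow_zero, one_mul]
    ring

lemma conjSignPerm_mul_pow_eq_one {a b : G} (ha : a * a = 1) (hb : b * b = 1) {m : ℕ}
    (hm : (a * b) ^ m = 1) : (conjSignPerm a * conjSignPerm b) ^ m = 1 := by
  have hm' : (b * a) ^ m = 1 := by
    rw [← inv_eq_of_mul_eq_one_right ha, ← inv_eq_of_mul_eq_one_right hb, ← mul_inv_rev,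
      inv_pow, hm, inv_one]
  ext ⟨x, ε⟩ : 1
  -- the terms of the sum are periodic of period `m`, so each occurs twice
  have hsum :
      ∑ n ∈ Finset.range (2 * m), (if x = (b * a) ^ n * b then 1 else 0 : ZMod 2) = 0 := by
    simp only [two_mul, Finset.sum_range_add, pow_add, hm', one_mul, CharTwo.add_self_eq_zero]
  simp [conjSignPerm_mul_pow ha hb, hm, hsum]

end ConjSignPerm

namespace CoxeterMatrix

variable {B : Type*} [DecidableEq B] (M : CoxeterMatrix B)

def simplyLacedCartan (i j : B) : ℤ := if i = j then 2 else if M i j = 3 then -1 else 0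

-- the dual of the geometric representation: it acts on all of `B → ℤ`, so `B` may be infinite
def simplyLacedReflection (i : B) : Module.End ℤ (B → ℤ) :=
  LinearMap.id - (LinearMap.proj i).smulRight (M.simplyLacedCartan i)

theorem simplyLacedReflection_apply (i : B) (f : B → ℤ) (k : B) :
    M.simplyLacedReflection i f k = f k - f i * M.simplyLacedCartan i k := by
  simp [simplyLacedReflection]

theorem isLiftable_simplyLacedReflection (hSL : ∀ i j : B, i ≠ j → M i j = 2 ∨ M i j = 3) :
    M.IsLiftable M.simplyLacedReflection := by
  intro i j
  have hii : M.simplyLacedCartan i i = 2 := if_pos rfl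
  have hjj : M.simplyLacedCartan j j = 2 := if_pos rfl
  rcases eq_or_ne i j with rfl | hij
  · ext f k
    simp only [M.diagonal, pow_one, Module.End.mul_apply, Module.End.one_apply,
      simplyLacedReflection_apply, hii]
    ring
  have hc : M.simplyLacedCartan i j = M.simplyLacedCartan j i := by
    simp [simplyLacedCartan, hij, hij.symm, M.symmetric i j]
  rcases hSL i j hij with hm | hm
  · have hij0 : M.simplyLacedCartan i j = 0 := by simp [simplyLacedCartan, hij, hm]
    rw [hm]
    ext f k
    simp only [pow_succ, pow_zero, one_mul, Module.End.mul_apply, Module.End.one_apply,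
      simplyLacedReflection_apply, hii, hjj, ← hc, hij0]
    ring
  · have hij1 : M.simplyLacedCartan i j = -1 := by simp [simplyLacedCartan, hij, hm]
    rw [hm]
    ext f k
    simp only [pow_succ, pow_zero, one_mul, Module.End.mul_apply, Module.End.one_apply,
      simplyLacedReflection_apply, hii, hjj, ← hc, hij1]
    ring

structure IsSimplyLacedBraidCongruence (r : List B → List B → Prop) : Prop where
  equivalence : Equivalence r
  cons (i : B) {ω ω' : List B} : r ω ω' → r (i :: ω) (i :: ω')
  comm (i j : B) (ω : List B) : M i j = 2 → r (i :: j :: ω) (j :: i :: ω)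
  braid (i j : B) (ω : List B) : M i j = 3 → r (i :: j :: i :: ω) (j :: i :: j :: ω)

end CoxeterMatrix

namespace CoxeterSystem

variable {B W : Type*} [Group W] {M : CoxeterMatrix B} (cs : CoxeterSystem M W)

local prefix:100 "s" => cs.simple
local prefix:100 "π" => cs.wordProd
local prefix:100 "ℓ" => cs.length
local prefix:100 "ris " => cs.rightInvSeq
local prefix:100 "lis " => cs.leftInvSeq

section SignRep

variable [DecidableEq W]

theorem isLiftable_conjSignPerm_simple : M.IsLiftable fun i => conjSignPerm (s i) := fun i j =>
  conjSignPerm_mul_pow_eq_one (cs.simple_mul_simple_self i) (cs.simple_mul_simple_self j)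
    (cs.simple_mul_simple_pow i j)

def signRep : W →* Equiv.Perm (W × ZMod 2) := cs.lift ⟨_, cs.isLiftable_conjSignPerm_simple⟩

theorem signRep_simple (i : B) : cs.signRep (s i) = conjSignPerm (s i) :=
  cs.lift_apply_simple cs.isLiftable_conjSignPerm_simple i

lemma signRep_wordProd (ω : List B) (x : W) (ε : ZMod 2) :
    cs.signRep (π ω) (x, ε) = (π ω * x * (π ω)⁻¹, ε + (ris ω).count x) := by
  induction ω with
  | nil => simp
  | cons i ω ih =>
    rw [wordProd_cons, map_mul, Equiv.Perm.mul_apply, ih, signRep_simple,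
      conjSignPerm_apply, rightInvSeq, List.count_cons]
    ext
    · simp only [mul_inv_rev, mul_assoc]
    · simp only [mul_mul_inv_eq_iff_eq, beq_iff_eq, eq_comm (a := x)]
      push_cast
      ring

theorem cast_count_leftInvSeq_eq_of_wordProd_eq {ω ω' : List B} (h : π ω = π ω') (t : W) :
    ((lis ω).count t : ZMod 2) = (lis ω').count t := by
  have key := congrArg (fun g => (cs.signRep g (t, 0)).2) (congrArg Inv.inv h)
  simpa only [← wordProd_reverse, signRep_wordProd, rightInvSeq_reverse, List.count_reverse,
    zero_add] using key

end SignRep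

theorem simple_mem_leftInvSeq_of_isLeftDescent {ω : List B} {i : B}
    (h : cs.IsLeftDescent (π ω) i) : s i ∈ lis ω := by
  classical
  obtain ⟨ω', hω', heq⟩ := cs.exists_isReduced (s i * π ω)
  have hword : π (i :: ω') = π ω := by rw [wordProd_cons, ← heq, simple_mul_simple_cancel_left]
  -- `s i` occurs exactly once in the inversion sequence of the word `i :: ω'` of `π ω`
  have hnot : s i ∉ lis ω' := fun hmem => by
    have := (cs.isLeftInversion_of_mem_leftInvSeq hω' hmem).2
    rw [← heq, simple_mul_simple_cancel_left] at this
    exact lt_asymm h this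
  have hnot' : s i ∉ (lis ω').map (MulAut.conj (s i)) := fun hmem => by
    obtain ⟨t, ht, hts⟩ := List.mem_map.mp hmem
    rw [MulAut.conj_apply, mul_mul_inv_eq_iff_eq, inv_mul_cancel, one_mul] at hts
    exact hnot (hts ▸ ht)
  have hodd : ((lis (i :: ω')).count (s i) : ZMod 2) = 1 := by
    rw [leftInvSeq, List.count_cons, List.count_eq_zero.mpr hnot']
    simp
  rw [cast_count_leftInvSeq_eq_of_wordProd_eq cs hword] at hodd
  exact List.count_pos_iff.mp (Nat.pos_of_ne_zero fun h0 => by simp [h0] at hodd)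

theorem exists_eraseIdx_of_isLeftDescent {ω : List B} {i : B} (h : cs.IsLeftDescent (π ω) i) :
    ∃ k < ω.length, s i * π ω = π (ω.eraseIdx k) := by
  obtain ⟨k, hk, hkeq⟩ := List.getElem_of_mem (cs.simple_mem_leftInvSeq_of_isLeftDescent h)
  refine ⟨k, by simpa using hk, ?_⟩
  rw [← getD_leftInvSeq_mul_wordProd, List.getD_eq_getElem _ _ hk, hkeq]

theorem simple_injective_of_simplyLaced (hSL : ∀ i j : B, i ≠ j → M i j = 2 ∨ M i j = 3) :
    Function.Injective cs.simple := by
  classical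
  intro i j h
  by_contra hij
  -- at the `i`-th coordinate of `Pi.single i 1`, `σ i` gives `-1` and `σ j` gives `1`
  have hrefl := congrArg (fun g => cs.lift ⟨_, M.isLiftable_simplyLacedReflection hSL⟩ g
    (Pi.single i 1) i) h
  simp only [lift_apply_simple, CoxeterMatrix.simplyLacedReflection_apply] at hrefl
  simp [CoxeterMatrix.simplyLacedCartan, Ne.symm hij] at hrefl

theorem simple_mul_simple_eq_of_eq_two {i j : B} (hm : M i j = 2) : s i * s j = s j * s i := by
  simpa [braidWord, hm, M.symmetric j i, alternatingWord, wordProd_cons] using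
    cs.wordProd_braidWord_eq i j

theorem simple_mul_simple_mul_simple_eq_of_eq_three {i j : B} (hm : M i j = 3) :
    s i * s j * s i = s j * s i * s j := by
  simpa [braidWord, hm, M.symmetric j i, alternatingWord, wordProd_cons, mul_assoc] using
    (cs.wordProd_braidWord_eq i j).symm

theorem length_simple_mul_simple_mul_add_two {w : W} {i j : B} (hij : s i ≠ s j)
    (hi : cs.IsLeftDescent w i) (hj : cs.IsLeftDescent w j) : ℓ (s i * (s j * w)) + 2 = ℓ w := by
  obtain ⟨ω, hω, hω_eq⟩ := cs.exists_isReduced (s i * w)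
  have hword : π (i :: ω) = w := by rw [wordProd_cons, ← hω_eq, simple_mul_simple_cancel_left]
  rw [← hword] at hj
  obtain ⟨k, hk, hkeq⟩ := cs.exists_eraseIdx_of_isLeftDescent hj
  rw [hword] at hkeq hj
  cases k with
  | zero =>
    rw [List.eraseIdx_cons_zero, ← hω_eq] at hkeq
    exact absurd (mul_right_cancel hkeq).symm hij
  | succ k =>
    rw [List.eraseIdx_cons_succ, wordProd_cons,
      ← cs.simple_mul_simple_cancel_left (w := s j * w) i, mul_right_inj] at hkeq
    have hle := hkeq ▸ cs.length_wordProd_le (ω.eraseIdx k)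
    have hlen := List.length_eraseIdx_add_one (Nat.lt_of_succ_lt_succ hk)
    rw [← hω.eq, ← hω_eq] at hlen
    rw [isLeftDescent_iff] at hi hj
    rcases cs.length_simple_mul (s j * w) i with h | h <;> omega

theorem exists_eq_simple_mul_simple_mul_simple_mul {w : W} {i j : B} (hij : s i ≠ s j)
    (hm : M i j = 3) (hi : cs.IsLeftDescent w i) (hj : cs.IsLeftDescent w j) :
    ∃ v, w = s i * (s j * (s i * v)) ∧ ℓ v + 3 = ℓ w := by
  have h2 := cs.length_simple_mul_simple_mul_add_two hij hi hj
  obtain ⟨u, hu, hu_eq⟩ := cs.exists_isReduced (s i * (s j * w))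
  have hword : π (j :: i :: u) = w := by
    rw [wordProd_cons, wordProd_cons, ← hu_eq, simple_mul_simple_cancel_left,
      simple_mul_simple_cancel_left]
  rw [← hword] at hi
  obtain ⟨k, hk, hkeq⟩ := cs.exists_eraseIdx_of_isLeftDescent hi
  rw [hword] at hkeq hi
  match k, hk with
  | 0, _ =>
    rw [List.eraseIdx_cons_zero, wordProd_cons, ← hu_eq, simple_mul_simple_cancel_left] at hkeq
    exact absurd (mul_right_cancel hkeq) hij
  | 1, _ =>
    rw [List.eraseIdx_cons_succ, List.eraseIdx_cons_zero, wordProd_cons, ← hu_eq,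
      ← mul_assoc, ← mul_assoc, ← cs.simple_mul_simple_mul_simple_eq_of_eq_three hm] at hkeq
    have hji : s j * s i = 1 := by rw [← left_eq_mul, ← mul_assoc]; exact mul_right_cancel hkeq
    exact (hij (by rw [eq_inv_of_mul_eq_one_left hji, inv_simple])).elim
  | k + 2, hk =>
    rw [List.eraseIdx_cons_succ, List.eraseIdx_cons_succ, wordProd_cons, wordProd_cons] at hkeq
    have hle := cs.length_wordProd_le (u.eraseIdx k)
    generalize π (u.eraseIdx k) = v at hkeq hle
    have hw : w = s i * (s j * (s i * v)) := by rw [← hkeq, simple_mul_simple_cancel_left]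
    refine ⟨v, hw, ?_⟩
    have hlen :=
      List.length_eraseIdx_add_one (Nat.lt_of_succ_lt_succ (Nat.lt_of_succ_lt_succ hk))
    rw [← hu.eq, ← hu_eq] at hlen
    have h₁ := cs.length_simple_mul v i
    have h₂ := cs.length_simple_mul (s i * v) j
    have h₃ := cs.length_simple_mul (s j * (s i * v)) i
    rw [← hw] at h₃
    omega

theorem isReduced_of_wordProd_eq {ω ω' : List B} (hω : cs.IsReduced ω) (h : π ω' = π ω)
    (hlen : ω'.length = ω.length) : cs.IsReduced ω' := by
  rw [IsReduced, h, hω.eq, hlen]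

theorem isLeftDescent_wordProd_cons {i : B} {ω : List B} (h : cs.IsReduced (i :: ω)) :
    cs.IsLeftDescent (π (i :: ω)) i := by
  have hω : cs.IsReduced ω := h.drop 1
  rw [isLeftDescent_iff, wordProd_cons, simple_mul_simple_cancel_left, ← wordProd_cons, hω.eq,
    h.eq, List.length_cons]

theorem rel_cons_cons_of_ne (hSL : ∀ i j : B, i ≠ j → M i j = 2 ∨ M i j = 3)
    {r : List B → List B → Prop} (hr : M.IsSimplyLacedBraidCongruence r) {i j : B}
    (hij : i ≠ j)
    {ω ω' : List B} (hω : cs.IsReduced (i :: ω)) (hω' : cs.IsReduced (j :: ω'))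
    (h : π (i :: ω) = π (j :: ω'))
    (ih : ∀ {ω₁ ω₂ : List B}, cs.IsReduced ω₁ → cs.IsReduced ω₂ → π ω₁ = π ω₂ →
      ω₁.length ≤ ω.length → r ω₁ ω₂) :
    r (i :: ω) (j :: ω') := by
  have hlen : ω'.length = ω.length := by simpa [h, hω'.eq] using hω.eq
  have hωr : cs.IsReduced ω := hω.drop 1
  have hω'r : cs.IsReduced ω' := hω'.drop 1
  have ih₁ {ω₁ : List B} (h₁ : π ω₁ = π ω) (hlen₁ : ω₁.length = ω.length) : r ω ω₁ :=
    ih hωr (cs.isReduced_of_wordProd_eq hωr h₁ hlen₁) h₁.symm le_rfl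
  have ih₂ {ω₁ : List B} (h₁ : π ω₁ = π ω') (hlen₁ : ω₁.length = ω.length) : r ω' ω₁ :=
    ih hω'r (cs.isReduced_of_wordProd_eq hω'r h₁ (hlen₁.trans hlen.symm)) h₁.symm hlen.le
  have hi := cs.isLeftDescent_wordProd_cons hω
  have hj := h ▸ cs.isLeftDescent_wordProd_cons hω'
  generalize hw : π (i :: ω) = w at hi hj h
  have hωw : π ω = s i * w := by rw [← hw, wordProd_cons, simple_mul_simple_cancel_left]
  have hω'w : π ω' = s j * w := by rw [h, wordProd_cons, simple_mul_simple_cancel_left]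
  have hlen_w : ℓ w = ω.length + 1 := by rw [← hw, hω.eq, List.length_cons]
  have hne := (cs.simple_injective_of_simplyLaced hSL).ne hij
  rcases hSL i j hij with hm | hm
  · obtain ⟨u, hu, hu_eq⟩ := cs.exists_isReduced (s j * (s i * w))
    have hlen_u := cs.length_simple_mul_simple_mul_add_two hne.symm hj hi
    rw [hu_eq, hu.eq] at hlen_u
    have h₁ : r ω (j :: u) :=
      ih₁ (by rw [wordProd_cons, ← hu_eq, simple_mul_simple_cancel_left, hωw]) (by simp; omega)
    have h₂ : r ω' (i :: u) := ih₂ (by rw [wordProd_cons, ← hu_eq, ← mul_assoc,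
      cs.simple_mul_simple_eq_of_eq_two hm, mul_assoc, simple_mul_simple_cancel_left, hω'w])
      (by simp; omega)
    exact hr.equivalence.trans (hr.cons i h₁)
      (hr.equivalence.trans (hr.comm i j u hm) (hr.equivalence.symm (hr.cons j h₂)))
  · obtain ⟨v, hwv, hlen_v⟩ := cs.exists_eq_simple_mul_simple_mul_simple_mul hne hm hi hj
    obtain ⟨u, hu, rfl⟩ := cs.exists_isReduced v
    rw [hu.eq] at hlen_v
    have h₁ : r ω (j :: i :: u) := ih₁ (by rw [wordProd_cons, wordProd_cons, hωw, hwv,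
      simple_mul_simple_cancel_left]) (by simp; omega)
    have h₂ : r ω' (i :: j :: u) := ih₂ (by
      simp only [wordProd_cons, hω'w, hwv, ← mul_assoc]
      rw [← cs.simple_mul_simple_mul_simple_eq_of_eq_three hm, simple_mul_simple_cancel_right])
      (by simp; omega)
    exact hr.equivalence.trans (hr.cons i h₁)
      (hr.equivalence.trans (hr.braid i j u hm) (hr.equivalence.symm (hr.cons j h₂)))

theorem rel_of_isReduced_of_wordProd_eq (hSL : ∀ i j : B, i ≠ j → M i j = 2 ∨ M i j = 3)
    {r : List B → List B → Prop} (hr : M.IsSimplyLacedBraidCongruence r) {ω ω' : List B}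
    (hω : cs.IsReduced ω) (hω' : cs.IsReduced ω') (h : π ω = π ω') : r ω ω' := by
  induction hn : ω.length using Nat.strong_induction_on generalizing ω ω' with
  | _ n ih =>
  match ω, ω' with
  | [], [] => exact hr.equivalence.refl _
  | [], j :: ω' => simpa [← h] using hω'.eq
  | i :: ω, [] => simpa [h] using hω.eq
  | i :: ω, j :: ω' =>
  have ih' {ω₁ ω₂ : List B} (h₁ : cs.IsReduced ω₁) (h₂ : cs.IsReduced ω₂) (h₁₂ : π ω₁ = π ω₂)
      (hlen : ω₁.length ≤ ω.length) : r ω₁ ω₂ :=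
    ih ω₁.length (by simp [← hn]; omega) h₁ h₂ h₁₂ rfl
  rcases eq_or_ne i j with rfl | hij
  · rw [wordProd_cons, wordProd_cons, mul_right_inj] at h
    exact hr.cons i (ih' (hω.drop 1) (hω'.drop 1) h le_rfl)
  · exact cs.rel_cons_cons_of_ne hSL hr hij hω hω' h ih'

end CoxeterSystem

theorem stmt17 {B : Type*} (M : CoxeterMatrix B) {W : Type*} [Group W]
    (cs : CoxeterSystem M W)
    -- simply laced: any two distinct vertices are either non-adjacent (`m i j = 2`)
    -- or joined by a single edge (`m i j = 3`)
    (hSL : ∀ i j : B, i ≠ j → M i j = 2 ∨ M i j = 3)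
    {C : Type*} [Category C] (Sg : B → C ⥤ C)
    -- the braid relation for vertices joined by one edge
    (hbraid : ∀ i j : B, M i j = 3 →
      Nonempty (Sg i ⋙ Sg j ⋙ Sg i ≅ Sg j ⋙ Sg i ⋙ Sg j))
    -- commutation for non-adjacent vertices
    (hcomm : ∀ i j : B, M i j = 2 → Nonempty (Sg i ⋙ Sg j ≅ Sg j ⋙ Sg i)) :
    ∀ l l' : List B, cs.IsReduced l → cs.IsReduced l' →
      cs.wordProd l = cs.wordProd l' →
      Nonempty (wordFunctor Sg l ≅ wordFunctor Sg l') := by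
  intro l l' hl hl' h
  have hcongr : M.IsSimplyLacedBraidCongruence fun l l' =>
      Nonempty (wordFunctor Sg l ≅ wordFunctor Sg l') :=
    { equivalence := (isIsomorphicSetoid (C ⥤ C)).iseqv.comap (wordFunctor Sg)
      cons := fun i _ _ ⟨e⟩ => ⟨Functor.isoWhiskerRight e (Sg i)⟩
      comm := fun i j ω hm =>
        (hcomm j i (M.symmetric i j ▸ hm)).map (Functor.isoWhiskerLeft (wordFunctor Sg ω))
      braid := fun i j ω hm => (hbraid i j hm).map (Functor.isoWhiskerLeft (wordFunctor Sg ω)) }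
  exact cs.rel_of_isReduced_of_wordProd_eq hSL hcongr hl hl' h
end
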